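/- arXiv:2605.30238 — 4 statements merged into one kernel-verified Lean document; each statement's English description precedes it below -/
import Mathlib

section
/- Let G be a finite group with unitary representations on the input and output spaces of n parties, and let K be the cone of positive semidefinite operators T on the tensor product of all parties' Choi spaces satisfying (V_g^{(1)}⊗⋯⊗V_g^{(n)}) T (V_g^{(1)}⊗⋯⊗V_g^{(n)})† = T for all g ∈ G, where V_g^{(k)} := U_g^{X^{(k)}_1} ⊗ conj(U_g^{X^{(k)}_2}). Then for every nonzero T ∈ K there exists a scalar a_T > 0, finite-dimensional ancilla systems R_k carrying unitary representations of G, a G-invariant shared ancilla state ρ on R_1⊗⋯⊗R_n, and (G,U)-covariant trace-nonincreasing CP Choi operators N_k on X^{(k)}_1 R_k X^{(k)}_2, such that a_T · T = Tr_{R_1⋯R_n}[(I ⊗ ρ)(N_1⊗⋯⊗N_n)]. -/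
open Matrix BigOperators
open scoped Kronecker ComplexOrder

noncomputable section

/-- Entrywise complex conjugation of a matrix (in the fixed basis). -/
def conjM {m n : Type*} (M : Matrix m n ℂ) : Matrix m n ℂ := M.map (starRingEnd ℂ)

/-- `n`-fold tensor (Kronecker) product of square complex matrices. -/
def tensorN {n : ℕ} {ι : Fin n → Type} (M : ∀ k, Matrix (ι k) (ι k) ℂ) :
    Matrix ((k : Fin n) → ι k) ((k : Fin n) → ι k) ℂ :=
  fun i j => ∏ k, M k (i k) (j k)

/-- Partial trace over the second tensor factor. -/
def ptr2 {a b : Type*} [Fintype b] (M : Matrix (a × b) (a × b) ℂ) : Matrix a a ℂ :=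
  fun i j => ∑ z, M (i, z) (j, z)

/-- Partial trace over the last factor of a triple tensor product. -/
def ptr3 {a b c : Type*} [Fintype c] (M : Matrix (a × b × c) (a × b × c) ℂ) :
    Matrix (a × b) (a × b) ℂ :=
  fun i j => ∑ z, M (i.1, i.2, z) (j.1, j.2, z)

/-- The `n`-party operator `N₁ ⊗ ⋯ ⊗ Nₙ`, reordered so that all Choi legs
`X₁⁽ᵏ⁾X₂⁽ᵏ⁾` come first and all ancilla legs `R₁,…,Rₙ` come last. -/
def bigProd {n : ℕ} {ι₁ ι₂ ρι : Fin n → Type}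
    (N : ∀ k, Matrix (ι₁ k × ρι k × ι₂ k) (ι₁ k × ρι k × ι₂ k) ℂ) :
    Matrix (((k : Fin n) → ι₁ k × ι₂ k) × ((k : Fin n) → ρι k))
           (((k : Fin n) → ι₁ k × ι₂ k) × ((k : Fin n) → ρι k)) ℂ :=
  fun p q => ∏ k, N k ((p.1 k).1, p.2 k, (p.1 k).2) ((q.1 k).1, q.2 k, (q.1 k).2)

/-- The effective test operator
`T_eff = Tr_{R₁⋯Rₙ} [(I ⊗ ρ)(N₁ ⊗ ⋯ ⊗ Nₙ)]`. -/
def Teff {n : ℕ} {ι₁ ι₂ ρι : Fin n → Type}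
    [∀ k, Fintype (ι₁ k)] [∀ k, DecidableEq (ι₁ k)]
    [∀ k, Fintype (ι₂ k)] [∀ k, DecidableEq (ι₂ k)]
    [∀ k, Fintype (ρι k)]
    (ρ : Matrix ((k : Fin n) → ρι k) ((k : Fin n) → ρι k) ℂ)
    (N : ∀ k, Matrix (ι₁ k × ρι k × ι₂ k) (ι₁ k × ρι k × ι₂ k) ℂ) :
    Matrix ((k : Fin n) → ι₁ k × ι₂ k) ((k : Fin n) → ι₁ k × ι₂ k) ℂ :=
  ptr2 (((1 : Matrix ((k : Fin n) → ι₁ k × ι₂ k) ((k : Fin n) → ι₁ k × ι₂ k) ℂ) ⊗ₖ ρ) *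
    bigProd N)


namespace ITaux

def outer {m : Type*} (v : m → ℂ) : Matrix m m ℂ := fun p q => v p * star (v q)

variable {α β : Type} [Fintype α] [DecidableEq α] [Fintype β] [DecidableEq β] {d : ℕ}

/-- The "bridge" isometry-like 0/1 matrix. -/
def Amat (e : α × β ≃ Fin d) : Matrix β (α × Fin d) ℂ :=
  fun z p => if e.symm p.2 = (p.1, z) then 1 else 0

def vvec (e : α × β ≃ Fin d) : α × Fin d × β → ℂ :=
  fun p => if e.symm p.2.1 = (p.1, p.2.2) then 1 else 0

def Nmat (e : α × β ≃ Fin d) : Matrix (α × Fin d × β) (α × Fin d × β) ℂ :=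
  ((Fintype.card α : ℂ))⁻¹ • outer (vvec e)

lemma star_vvec (e : α × β ≃ Fin d) (p : α × Fin d × β) :
    star (vvec e p) = vvec e p := by
  simp [vvec, apply_ite (star : ℂ → ℂ)]

lemma AA_eq (e : α × β ≃ Fin d) :
    Amat e * (Amat e)ᴴ = (Fintype.card α : ℂ) • 1 := by
  ext z w
  simp only [Matrix.mul_apply, Matrix.conjTranspose_apply, Amat, Matrix.smul_apply,
    Matrix.one_apply, smul_eq_mul]
  rw [Fintype.sum_prod_type]
  simp only [apply_ite (star : ℂ → ℂ), star_one, star_zero, ite_mul, one_mul, zero_mul,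
    Equiv.symm_apply_eq]
  simp only [Finset.sum_ite_eq', Finset.mem_univ, if_true, EmbeddingLike.apply_eq_iff_eq,
    Prod.mk.injEq, true_and]
  simp [Finset.sum_ite_eq, mul_ite, mul_one, mul_zero, eq_comm]

set_option linter.unusedSectionVars false

lemma outer_psd {m : Type*} [Fintype m] (v : m → ℂ) : (outer v).PosSemidef := by
  refine Matrix.PosSemidef.of_dotProduct_mulVec_nonneg ?_ ?_
  · ext p q
    simp [outer, Matrix.conjTranspose_apply, mul_comm]
  · intro x
    have h : star x ⬝ᵥ (outer v) *ᵥ x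
        = star (∑ q, star (v q) * x q) * (∑ q, star (v q) * x q) := by
      simp only [dotProduct, Matrix.mulVec, Pi.star_apply, outer, star_sum]
      rw [Fintype.sum_mul_sum]
      refine Finset.sum_congr rfl fun p _ => ?_
      rw [Finset.mul_sum]
      refine Finset.sum_congr rfl fun q _ => ?_
      simp only [star_mul', star_star]
      ring
    rw [h]
    exact star_mul_self_nonneg _

lemma conj_outer {m : Type*} [Fintype m] (W : Matrix m m ℂ) (v : m → ℂ) :
    W * outer v * Wᴴ = outer (W *ᵥ v) := by
  ext p q
  simp only [Matrix.mul_apply, outer, Matrix.conjTranspose_apply, Matrix.mulVec, dotProduct,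
    star_sum]
  rw [Fintype.sum_mul_sum, Finset.sum_comm]
  refine Finset.sum_congr rfl fun q' _ => ?_
  rw [Finset.sum_mul]
  refine Finset.sum_congr rfl fun p' _ => ?_
  simp only [star_mul', star_star]
  ring

lemma smul_psd {m : Type*} [Fintype m] {M : Matrix m m ℂ} (hM : M.PosSemidef)
    (c : ℝ) (hc : 0 ≤ c) : ((c : ℂ) • M).PosSemidef := by
  refine Matrix.PosSemidef.of_dotProduct_mulVec_nonneg ?_ ?_
  · have h : ((c : ℂ) • M)ᴴ = star (c : ℂ) • Mᴴ := Matrix.conjTranspose_smul _ _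
    rw [Matrix.IsHermitian, h, hM.1.eq]
    congr 1
    simp
  · intro x
    rw [Matrix.smul_mulVec, dotProduct_smul, smul_eq_mul]
    exact mul_nonneg (Complex.zero_le_real.mpr hc) (hM.dotProduct_mulVec_nonneg x)

lemma Nmat_psd (e : α × β ≃ Fin d) : (Nmat e).PosSemidef := by
  have hcast : ((((Fintype.card α : ℝ))⁻¹ : ℝ) : ℂ) = ((Fintype.card α : ℂ))⁻¹ := by
    push_cast; ring
  rw [Nmat, ← hcast]
  exact smul_psd (outer_psd _) _ (inv_nonneg.mpr (Nat.cast_nonneg _))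

lemma ptr3_Nmat (e : α × β ≃ Fin d) :
    ptr3 (Nmat e) = ((Fintype.card α : ℂ))⁻¹ • ((Amat e)ᴴ * Amat e) := by
  ext i j
  obtain ⟨i1, i2⟩ := i
  obtain ⟨j1, j2⟩ := j
  simp only [ptr3, Nmat, outer, Matrix.smul_apply, smul_eq_mul, Matrix.mul_apply,
    Matrix.conjTranspose_apply, Finset.mul_sum]
  refine Finset.sum_congr rfl fun z _ => ?_
  have h1 : vvec e (i1, i2, z) = Amat e z (i1, i2) := rfl
  have h2 : vvec e (j1, j2, z) = Amat e z (j1, j2) := rfl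
  have h3 : star (Amat e z (i1, i2)) = Amat e z (i1, i2) := by
    simp [Amat, apply_ite (star : ℂ → ℂ)]
  have h4 : star (Amat e z (j1, j2)) = Amat e z (j1, j2) := by
    simp [Amat, apply_ite (star : ℂ → ℂ)]
  rw [h1, h2, h3, h4]

lemma Nmat_tni [Nonempty α] (e : α × β ≃ Fin d) :
    ((1 : Matrix (α × Fin d) (α × Fin d) ℂ) - ptr3 (Nmat e)).PosSemidef := by
  have hcard : (Fintype.card α : ℂ) ≠ 0 :=
    Nat.cast_ne_zero.mpr Fintype.card_ne_zero
  rw [ptr3_Nmat]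
  set P := ((Fintype.card α : ℂ))⁻¹ • ((Amat e)ᴴ * Amat e) with hP
  have hassoc : (Amat e)ᴴ * Amat e * ((Amat e)ᴴ * Amat e)
      = (Fintype.card α : ℂ) • ((Amat e)ᴴ * Amat e) := by
    rw [Matrix.mul_assoc ((Amat e)ᴴ) (Amat e) _, ← Matrix.mul_assoc (Amat e) ((Amat e)ᴴ) (Amat e),
      AA_eq, Matrix.smul_mul, Matrix.one_mul, Matrix.mul_smul]
  have hPP : P * P = P := by
    rw [hP, Matrix.smul_mul, Matrix.mul_smul, smul_smul, hassoc, smul_smul]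
    congr 1
    field_simp
  have hPherm : Pᴴ = P := by
    rw [hP, Matrix.conjTranspose_smul, Matrix.conjTranspose_mul,
      Matrix.conjTranspose_conjTranspose]
    congr 1
    simp
  have hQQ : ((1 : Matrix (α × Fin d) (α × Fin d) ℂ) - P) * (1 - P) = 1 - P := by
    simp only [Matrix.sub_mul, Matrix.mul_sub, Matrix.one_mul, Matrix.mul_one, hPP]
    abel
  have h := Matrix.posSemidef_conjTranspose_mul_self ((1 : Matrix (α × Fin d) (α × Fin d) ℂ) - P)
  rw [Matrix.conjTranspose_sub, hPherm, Matrix.conjTranspose_one, hQQ] at h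
  exact h

lemma conjM_mul {m n p : Type*} [Fintype n] (A : Matrix m n ℂ) (B : Matrix n p ℂ) :
    conjM (A * B) = conjM A * conjM B := by
  ext i j
  simp [conjM, Matrix.mul_apply, map_sum]

lemma conjM_conjTranspose {m n : Type*} (A : Matrix m n ℂ) :
    conjM Aᴴ = (conjM A)ᴴ := by
  ext i j; simp [conjM]

lemma conjM_one {m : Type*} [DecidableEq m] : conjM (1 : Matrix m m ℂ) = 1 := by
  ext i j; simp [conjM, Matrix.one_apply, apply_ite]

lemma conjM_conjM {m n : Type*} (A : Matrix m n ℂ) : conjM (conjM A) = A := by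
  ext i j; simp [conjM]

lemma conjM_kronecker {m n m' n' : Type*} (A : Matrix m n ℂ) (B : Matrix m' n' ℂ) :
    conjM (A ⊗ₖ B) = conjM A ⊗ₖ conjM B := by
  ext i j; simp [conjM, Matrix.kroneckerMap_apply]

lemma kron_conjTranspose {m n m' n' : Type*} (A : Matrix m n ℂ) (B : Matrix m' n' ℂ) :
    (A ⊗ₖ B)ᴴ = Aᴴ ⊗ₖ Bᴴ := by
  ext i j
  simp [Matrix.kroneckerMap_apply, Matrix.conjTranspose_apply, mul_comm]

lemma Nmat_cov (e : α × β ≃ Fin d) (U1 : Matrix α α ℂ) (U2 : Matrix β β ℂ)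
    (h1 : U1 * U1ᴴ = 1) (h2 : U2 * U2ᴴ = 1) :
    (U1 ⊗ₖ (((conjM U1 ⊗ₖ U2).submatrix (e.symm : Fin d → α × β) e.symm) ⊗ₖ conjM U2)) *
        Nmat e *
      (U1 ⊗ₖ (((conjM U1 ⊗ₖ U2).submatrix (e.symm : Fin d → α × β) e.symm) ⊗ₖ conjM U2))ᴴ
      = Nmat e := by
  set W := U1 ⊗ₖ (((conjM U1 ⊗ₖ U2).submatrix (e.symm : Fin d → α × β) e.symm) ⊗ₖ conjM U2)
    with hW
  have hWv : W *ᵥ vvec e = vvec e := by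
    funext p
    obtain ⟨x1, r, x2⟩ := p
    simp only [Matrix.mulVec, dotProduct, hW, Matrix.kroneckerMap_apply,
      Matrix.submatrix_apply, vvec, conjM, Matrix.map_apply]
    rw [Fintype.sum_prod_type]
    simp only [Fintype.sum_prod_type]
    simp only [Equiv.symm_apply_eq, mul_ite, mul_one, mul_zero]
    refine Eq.trans (Finset.sum_congr rfl fun y1 _ => Finset.sum_comm) ?_
    simp only [Finset.sum_ite_eq', Finset.mem_univ, if_true, Equiv.symm_apply_apply]
    have hterm : ∀ (y1 : α) (y2 : β),
        U1 x1 y1 * (starRingEnd ℂ (U1 (e.symm r).1 y1) * U2 (e.symm r).2 y2 *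
          starRingEnd ℂ (U2 x2 y2))
        = (U1 x1 y1 * star (U1 (e.symm r).1 y1)) * (U2 (e.symm r).2 y2 * star (U2 x2 y2)) := by
      intro y1 y2
      simp only [RingHom.coe_coe, starRingEnd_apply]
      ring
    simp only [hterm]
    rw [← Fintype.sum_mul_sum]
    have hA : (∑ y1, U1 x1 y1 * star (U1 (e.symm r).1 y1)) = (U1 * U1ᴴ) x1 (e.symm r).1 := by
      simp [Matrix.mul_apply, Matrix.conjTranspose_apply]
    have hB : (∑ y2, U2 (e.symm r).2 y2 * star (U2 x2 y2)) = (U2 * U2ᴴ) (e.symm r).2 x2 := by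
      simp [Matrix.mul_apply, Matrix.conjTranspose_apply]
    rw [hA, hB, h1, h2]
    have hcond : (r = e (x1, x2)) ↔ (x1 = (e.symm r).1 ∧ (e.symm r).2 = x2) := by
      rw [← Equiv.symm_apply_eq, Prod.ext_iff]
      exact ⟨fun h => ⟨h.1.symm, h.2⟩, fun h => ⟨h.1.symm, h.2⟩⟩
    rw [Matrix.one_apply, Matrix.one_apply]
    by_cases hx : x1 = (e.symm r).1 <;> by_cases hy : (e.symm r).2 = x2
    · rw [if_pos hx, if_pos hy, if_pos (hcond.mpr ⟨hx, hy⟩), one_mul]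
    · rw [if_neg hy, mul_zero, if_neg (fun hc => hy (hcond.mp hc).2)]
    · rw [if_neg hx, zero_mul, if_neg (fun hc => hx (hcond.mp hc).1)]
    · rw [if_neg hx, zero_mul, if_neg (fun hc => hx (hcond.mp hc).1)]
  rw [Nmat, Matrix.mul_smul, Matrix.smul_mul, conj_outer, hWv]

lemma prod_ite_eq_fun {n : ℕ} {ι : Fin n → Type} [∀ k, DecidableEq (ι k)]
    (w f : ∀ k, ι k) :
    (∏ k, if w k = f k then (1 : ℂ) else 0) = if w = f then 1 else 0 := by
  by_cases h : w = f
  · simp [h]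
  · obtain ⟨k, hk⟩ := Function.ne_iff.mp h
    rw [if_neg h]
    exact Finset.prod_eq_zero (Finset.mem_univ k) (by simp [hk])



lemma Teff_Nmat {n : ℕ} {ι₁ ι₂ : Fin n → Type}
    [∀ k, Fintype (ι₁ k)] [∀ k, DecidableEq (ι₁ k)]
    [∀ k, Fintype (ι₂ k)] [∀ k, DecidableEq (ι₂ k)]
    (d : Fin n → ℕ) (e : ∀ k, (ι₁ k × ι₂ k) ≃ Fin (d k))
    (ρ : Matrix ((k : Fin n) → Fin (d k)) ((k : Fin n) → Fin (d k)) ℂ)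
    (i j : (k : Fin n) → ι₁ k × ι₂ k) :
    Teff ρ (fun k => Nmat (e k)) i j
      = (∏ k, ((Fintype.card (ι₁ k) : ℂ))⁻¹) *
          ρ (fun k => e k (j k)) (fun k => e k (i k)) := by
  classical
  have step1 : ∀ z : (k : Fin n) → Fin (d k),
      (∑ q : ((k : Fin n) → ι₁ k × ι₂ k) × ((k : Fin n) → Fin (d k)),
        ((1 : Matrix ((k : Fin n) → ι₁ k × ι₂ k) ((k : Fin n) → ι₁ k × ι₂ k) ℂ) ⊗ₖ ρ)
            (i, z) q * bigProd (fun k => Nmat (e k)) q (j, z))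
      = ∑ w, ρ z w * bigProd (fun k => Nmat (e k)) (i, w) (j, z) := by
    intro z
    rw [Fintype.sum_prod_type, Finset.sum_comm]
    refine Finset.sum_congr rfl fun w _ => ?_
    simp only [Matrix.kroneckerMap_apply, Matrix.one_apply, ite_mul, one_mul, zero_mul]
    simp [Finset.sum_ite_eq]
  have hbig : ∀ (w z : (k : Fin n) → Fin (d k)),
      bigProd (fun k => Nmat (e k)) (i, w) (j, z)
      = (∏ k, ((Fintype.card (ι₁ k) : ℂ))⁻¹) *
        ((if w = (fun k => e k (i k)) then (1:ℂ) else 0) *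
         (if z = (fun k => e k (j k)) then (1:ℂ) else 0)) := by
    intro w z
    simp only [bigProd, Nmat, outer, Matrix.smul_apply, smul_eq_mul]
    rw [Finset.prod_mul_distrib, Finset.prod_mul_distrib]
    congr 1
    congr 1
    · rw [← prod_ite_eq_fun]
      refine Finset.prod_congr rfl fun k _ => ?_
      simp only [vvec, Prod.mk.eta, Equiv.symm_apply_eq]
    · rw [← prod_ite_eq_fun]
      refine Finset.prod_congr rfl fun k _ => ?_
      rw [star_vvec]
      simp only [vvec, Prod.mk.eta, Equiv.symm_apply_eq]
  have hterm : ∀ (z w : (k : Fin n) → Fin (d k)),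
      ρ z w * ((∏ k, ((Fintype.card (ι₁ k) : ℂ))⁻¹) *
        ((if w = (fun k => e k (i k)) then (1:ℂ) else 0) *
         (if z = (fun k => e k (j k)) then (1:ℂ) else 0)))
      = if w = (fun k => e k (i k)) then
          (if z = (fun k => e k (j k)) then
            (∏ k, ((Fintype.card (ι₁ k) : ℂ))⁻¹) * ρ z w else 0) else 0 := by
    intro z w
    split_ifs <;> ring
  show (∑ z, _) = _
  simp only [Teff, ptr2, Matrix.mul_apply, step1, hbig, hterm, Finset.sum_ite_eq',
    Finset.mem_univ, if_true]

end ITaux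

/-- Every nonzero positive semidefinite, globally `G`-invariant
operator `T` on the tensor product of the parties' Choi spaces is, up to a positive
scalar, an effective test operator generated by a `G`-invariant shared ancilla state
and local `(G,U)`-covariant trace-nonincreasing CP Choi operators. -/
theorem invariant_psd_is_effective_tester
    {n : ℕ} {G : Type} [Group G] [Fintype G]
    {ι₁ ι₂ : Fin n → Type}
    [∀ k, Fintype (ι₁ k)] [∀ k, DecidableEq (ι₁ k)]
    [∀ k, Fintype (ι₂ k)] [∀ k, DecidableEq (ι₂ k)]
    (U1 : ∀ k, G → Matrix (ι₁ k) (ι₁ k) ℂ)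
    (U2 : ∀ k, G → Matrix (ι₂ k) (ι₂ k) ℂ)
    (hU1uni : ∀ k g, U1 k g ∈ Matrix.unitaryGroup (ι₁ k) ℂ)
    (hU2uni : ∀ k g, U2 k g ∈ Matrix.unitaryGroup (ι₂ k) ℂ)
    (hU1mul : ∀ k g h, U1 k (g * h) = U1 k g * U1 k h)
    (hU2mul : ∀ k g h, U2 k (g * h) = U2 k g * U2 k h)
    (T : Matrix ((k : Fin n) → ι₁ k × ι₂ k) ((k : Fin n) → ι₁ k × ι₂ k) ℂ)
    (hTpsd : T.PosSemidef)
    (hTinv : ∀ g : G,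
      tensorN (fun k => U1 k g ⊗ₖ conjM (U2 k g)) * T *
        (tensorN (fun k => U1 k g ⊗ₖ conjM (U2 k g)))ᴴ = T)
    (hTne : T ≠ 0) :
    ∃ (a : ℝ), 0 < a ∧
    ∃ (dR : Fin n → ℕ)
      (UR : ∀ k, G → Matrix (Fin (dR k)) (Fin (dR k)) ℂ),
      (∀ k g, UR k g ∈ Matrix.unitaryGroup (Fin (dR k)) ℂ) ∧
      (∀ k g h, UR k (g * h) = UR k g * UR k h) ∧
      ∃ ρ : Matrix ((k : Fin n) → Fin (dR k)) ((k : Fin n) → Fin (dR k)) ℂ,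
        ρ.PosSemidef ∧ ρ.trace = 1 ∧
        (∀ g : G, tensorN (fun k => UR k g) * ρ * (tensorN (fun k => UR k g))ᴴ = ρ) ∧
        ∃ N : ∀ k, Matrix (ι₁ k × Fin (dR k) × ι₂ k) (ι₁ k × Fin (dR k) × ι₂ k) ℂ,
          (∀ k, (N k).PosSemidef) ∧
          (∀ k, ((1 : Matrix (ι₁ k × Fin (dR k)) (ι₁ k × Fin (dR k)) ℂ) -
            ptr3 (N k)).PosSemidef) ∧
          (∀ k g,
            (U1 k g ⊗ₖ (UR k g ⊗ₖ conjM (U2 k g))) * N k *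
              (U1 k g ⊗ₖ (UR k g ⊗ₖ conjM (U2 k g)))ᴴ = N k) ∧
          (a : ℂ) • T = Teff ρ N := by
  classical
  have hne : Nonempty ((k : Fin n) → ι₁ k × ι₂ k) := by
    by_contra h
    exact hTne (by ext i j; exact absurd ⟨i⟩ h)
  obtain ⟨x0⟩ := hne
  have hne1 : ∀ k, Nonempty (ι₁ k) := fun k => ⟨(x0 k).1⟩
  obtain ⟨B, hB⟩ : ∃ B : Matrix ((k : Fin n) → ι₁ k × ι₂ k) ((k : Fin n) → ι₁ k × ι₂ k) ℂ,
      T = Bᴴ * B := by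
    open scoped MatrixOrder Matrix.Norms.L2Operator in
    obtain ⟨B, hB⟩ := CStarAlgebra.nonneg_iff_eq_star_mul_self.mp hTpsd.nonneg
    exact ⟨B, hB⟩
  set r : ℝ := ∑ i, ∑ j, Complex.normSq (B j i) with hr
  have htr : T.trace = (r : ℂ) := by
    rw [hB, hr]
    push_cast
    rw [Matrix.trace]
    simp only [Matrix.diag_apply, Matrix.mul_apply, Matrix.conjTranspose_apply]
    refine Finset.sum_congr rfl fun i _ => Finset.sum_congr rfl fun j _ => ?_
    rw [Complex.normSq_eq_conj_mul_self]
    rfl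
  have hrnonneg : 0 ≤ r :=
    Finset.sum_nonneg fun i _ => Finset.sum_nonneg fun j _ => Complex.normSq_nonneg _
  have hrne : r ≠ 0 := by
    intro h0
    apply hTne
    have hsum : (∑ i, ∑ j, Complex.normSq (B j i)) = 0 := by rw [← hr]; exact h0
    have h1 : ∀ i, (∑ j, Complex.normSq (B j i)) = 0 := by
      intro i
      have := (Finset.sum_eq_zero_iff_of_nonneg
        (fun i _ => Finset.sum_nonneg fun j _ => Complex.normSq_nonneg (B j i))).mp hsum
      exact this i (Finset.mem_univ i)
    have h2 : ∀ j i, Complex.normSq (B j i) = 0 := by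
      intro j i
      have := (Finset.sum_eq_zero_iff_of_nonneg
        (fun j _ => Complex.normSq_nonneg (B j i))).mp (h1 i)
      exact this j (Finset.mem_univ j)
    have hB0 : B = 0 := by
      ext j i
      exact Complex.normSq_eq_zero.mp (h2 j i)
    rw [hB, hB0]
    simp
  have hrpos : 0 < r := lt_of_le_of_ne hrnonneg (Ne.symm hrne)
  have hU1' : ∀ k g, U1 k g * (U1 k g)ᴴ = 1 := fun k g => by
    have h := (Matrix.mem_unitaryGroup_iff).mp (hU1uni k g)
    rwa [Matrix.star_eq_conjTranspose] at h
  have hU2' : ∀ k g, U2 k g * (U2 k g)ᴴ = 1 := fun k g => by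
    have h := (Matrix.mem_unitaryGroup_iff).mp (hU2uni k g)
    rwa [Matrix.star_eq_conjTranspose] at h
  set dR : Fin n → ℕ := fun k => Fintype.card (ι₁ k × ι₂ k) with hdR
  set e : (k : Fin n) → (ι₁ k × ι₂ k) ≃ Fin (dR k) := fun k => Fintype.equivFin _ with he
  set UR : ∀ (k : Fin n), G → Matrix (Fin (dR k)) (Fin (dR k)) ℂ := fun k g =>
    (conjM (U1 k g) ⊗ₖ U2 k g).submatrix (e k).symm (e k).symm with hUR
  set ρ : Matrix ((k : Fin n) → Fin (dR k)) ((k : Fin n) → Fin (dR k)) ℂ :=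
    ((r⁻¹ : ℝ) : ℂ) • (conjM T).submatrix (Equiv.piCongrRight e).symm (Equiv.piCongrRight e).symm
    with hρ
  refine ⟨(∏ k, ((Fintype.card (ι₁ k) : ℝ))⁻¹) * r⁻¹, ?_, dR, UR, ?_, ?_, ρ, ?_, ?_, ?_,
    fun k => ITaux.Nmat (e k), ?_, ?_, ?_, ?_⟩
  · refine mul_pos (Finset.prod_pos fun k _ => ?_) (inv_pos.mpr hrpos)
    have : 0 < Fintype.card (ι₁ k) := @Fintype.card_pos _ _ (hne1 k)
    positivity
  · intro k g
    rw [Matrix.mem_unitaryGroup_iff, Matrix.star_eq_conjTranspose]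
    simp only [hUR]
    rw [Matrix.conjTranspose_submatrix, Matrix.submatrix_mul_equiv,
      ITaux.kron_conjTranspose, ← Matrix.mul_kronecker_mul, ← ITaux.conjM_conjTranspose,
      ← ITaux.conjM_mul, hU1' k g, ITaux.conjM_one, hU2' k g, Matrix.one_kronecker_one,
      Matrix.submatrix_one_equiv]
  · intro k g h
    simp only [hUR]
    rw [hU1mul, hU2mul, ITaux.conjM_mul, Matrix.mul_kronecker_mul, Matrix.submatrix_mul_equiv]
  · rw [hρ]
    refine ITaux.smul_psd ?_ _ (inv_nonneg.mpr hrnonneg)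
    have hc : (conjM T).PosSemidef := by
      rw [hB, ITaux.conjM_mul, ITaux.conjM_conjTranspose]
      exact Matrix.posSemidef_conjTranspose_mul_self _
    exact hc.submatrix _
  · rw [hρ, Matrix.trace_smul]
    have h1 : ((conjM T).submatrix (Equiv.piCongrRight e).symm
        (Equiv.piCongrRight e).symm).trace = (r : ℂ) := by
      have h2 : ((conjM T).submatrix (Equiv.piCongrRight e).symm
          (Equiv.piCongrRight e).symm).trace
          = ∑ z, conjM T ((Equiv.piCongrRight e).symm z) ((Equiv.piCongrRight e).symm z) := rfl
      rw [h2, Equiv.sum_comp (Equiv.piCongrRight e).symm (fun p => conjM T p p)]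
      have h3 : (∑ p, conjM T p p) = star T.trace := by
        rw [Matrix.trace, star_sum]
        rfl
      rw [h3, htr]
      simp
    rw [h1, smul_eq_mul, ← Complex.ofReal_mul, inv_mul_cancel₀ hrne, Complex.ofReal_one]
  · intro g
    have hVc : tensorN (fun k => UR k g)
        = (conjM (tensorN (fun k => U1 k g ⊗ₖ conjM (U2 k g)))).submatrix
            (Equiv.piCongrRight e).symm (Equiv.piCongrRight e).symm := by
      ext z w
      simp only [tensorN, hUR, conjM, Matrix.submatrix_apply, Matrix.map_apply,
        Matrix.kroneckerMap_apply, map_prod, _root_.map_mul, Equiv.piCongrRight_symm_apply,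
        Pi.map_apply, Complex.conj_conj]
    rw [hVc, hρ, Matrix.mul_smul, Matrix.smul_mul, Matrix.conjTranspose_submatrix,
      Matrix.submatrix_mul_equiv, Matrix.submatrix_mul_equiv]
    have hc : conjM (tensorN fun k => U1 k g ⊗ₖ conjM (U2 k g)) * conjM T *
        (conjM (tensorN fun k => U1 k g ⊗ₖ conjM (U2 k g)))ᴴ = conjM T := by
      rw [← ITaux.conjM_conjTranspose, ← ITaux.conjM_mul, ← ITaux.conjM_mul, hTinv g]
    rw [hc]
  · exact fun k => ITaux.Nmat_psd (e k)
  · intro k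
    haveI := hne1 k
    exact ITaux.Nmat_tni (e k)
  · intro k g
    simp only [hUR]
    exact ITaux.Nmat_cov (e k) (U1 k g) (U2 k g) (hU1' k g) (hU2' k g)
  · ext i j
    rw [ITaux.Teff_Nmat dR e ρ i j, hρ]
    have hEj : (Equiv.piCongrRight e).symm (fun k => e k (j k)) = j := by
      funext k
      simp
    have hEi : (Equiv.piCongrRight e).symm (fun k => e k (i k)) = i := by
      funext k
      simp
    rw [Matrix.smul_apply, Matrix.smul_apply, Matrix.submatrix_apply, hEj, hEi]
    have hTij : conjM T j i = T i j := by
      have h := congrFun (congrFun hTpsd.1.eq i) j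
      rw [Matrix.conjTranspose_apply] at h
      rw [conjM, Matrix.map_apply, ← h]
      rfl
    rw [hTij]
    push_cast
    simp only [smul_eq_mul]
    ring
end
end

section
/- For two parties A and B each with two-dimensional input and output spaces, let W_la be a self-adjoint operator on (ℂ²)^{⊗4} (factors ordered A_1, A_2, B_1, B_2) lying in the tensor product Herm_ℝ^{A_1A_2} ⊗ Herm_ℝ^{B_1B_2} of the local real self-adjoint operator spaces, and suppose Tr[W_la (M^{A_1A_2} ⊗ M^{B_1B_2})] = 1 for all real CPTP Choi matrices M^{A_1A_2} and M^{B_1B_2}. Then W_la lies in (K_A ⊗ K_B) ⊕ (T_A ⊗ K_B⁰) ⊕ (K_A⁰ ⊗ T_B), where for X ∈ {A,B}: K_X := span_ℝ{I, σx^{X_1}, σz^{X_1}}, K_X⁰ := span_ℝ{σx^{X_1}, σz^{X_1}}, and T_X := {N ∈ Herm_ℝ^{X_1X_2} : Tr_{X_2} N = 0}. Equivalently, the Pauli expansion of W_la is supported only on the OCB-allowed support types 1, A_1, B_1, A_1B_1, A_2B_1, A_1B_2, A_1A_2B_1, A_1B_1B_2. -/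
open Matrix BigOperators
open scoped Kronecker ComplexOrder

noncomputable section

def σx : Matrix (Fin 2) (Fin 2) ℂ := !![0, 1; 1, 0]
def σy : Matrix (Fin 2) (Fin 2) ℂ := !![0, -Complex.I; Complex.I, 0]
def σz : Matrix (Fin 2) (Fin 2) ℂ := !![1, 0; 0, -1]

/-- The Choi space of a qubit input-output pair. -/
abbrev Q2 := Fin 2 × Fin 2

/-- Real CPTP Choi matrix on a qubit pair. -/
def IsRealCPTPChoi (M : Matrix Q2 Q2 ℂ) : Prop :=
  conjM M = M ∧ M.PosSemidef ∧ ptr2 M = 1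

/-- The ten generators of the local real self-adjoint operator space
`Herm_ℝ^{X₁X₂}`. -/
def hermRGen : Set (Matrix Q2 Q2 ℂ) :=
  {(1 : Matrix (Fin 2) (Fin 2) ℂ) ⊗ₖ 1,
   σx ⊗ₖ 1, σz ⊗ₖ 1,
   (1 : Matrix (Fin 2) (Fin 2) ℂ) ⊗ₖ σx, (1 : Matrix (Fin 2) (Fin 2) ℂ) ⊗ₖ σz,
   σx ⊗ₖ σx, σx ⊗ₖ σz, σz ⊗ₖ σx, σz ⊗ₖ σz, σy ⊗ₖ σy}

/-- `Herm_ℝ^{X₁X₂}` as a real subspace of the local Choi operator space. -/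
def HermR : Submodule ℝ (Matrix Q2 Q2 ℂ) := Submodule.span ℝ hermRGen

/-- `K_X = span_ℝ {I, σx^{X₁}, σz^{X₁}}`. -/
def KX : Submodule ℝ (Matrix Q2 Q2 ℂ) :=
  Submodule.span ℝ {(1 : Matrix (Fin 2) (Fin 2) ℂ) ⊗ₖ 1, σx ⊗ₖ 1, σz ⊗ₖ 1}

/-- `K_X⁰ = span_ℝ {σx^{X₁}, σz^{X₁}}`. -/
def KX0 : Submodule ℝ (Matrix Q2 Q2 ℂ) :=
  Submodule.span ℝ {σx ⊗ₖ (1 : Matrix (Fin 2) (Fin 2) ℂ), σz ⊗ₖ 1}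

/-- `T_X = {N ∈ Herm_ℝ^{X₁X₂} : Tr_{X₂} N = 0}`. -/
def TXset : Set (Matrix Q2 Q2 ℂ) := {N | N ∈ HermR ∧ ptr2 N = 0}

/-- The real span of Kronecker products `a ⊗ₖ b` with `a ∈ P` and `b ∈ Q`; for
subspaces `P, Q` this realises the tensor product `P ⊗ Q` inside the bipartite
operator space.  The tensor factors are grouped as `(A₁A₂) × (B₁B₂)`. -/
def kronSpan (P Q : Set (Matrix Q2 Q2 ℂ)) :
    Submodule ℝ (Matrix (Q2 × Q2) (Q2 × Q2) ℂ) :=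
  Submodule.span ℝ {m | ∃ a ∈ P, ∃ b ∈ Q, m = a ⊗ₖ b}

section Aux

-- auxiliary definitions and lemmas
def pr : Fin 4 → Matrix (Fin 2) (Fin 2) ℂ := ![1, σx, σy, σz]
def fa : Fin 10 → Fin 4 := ![0,1,3,0,0,1,1,3,3,2]
def fb : Fin 10 → Fin 4 := ![0,0,0,1,3,1,3,1,3,2]
def gen (i : Fin 10) : Matrix Q2 Q2 ℂ := pr (fa i) ⊗ₖ pr (fb i)

lemma pr_herm (a : Fin 4) : (pr a)ᴴ = pr a := by
  fin_cases a <;>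
    · ext i j
      fin_cases i <;> fin_cases j <;>
        simp [pr, σx, σy, σz, conjTranspose_apply, Complex.ext_iff]

lemma pr_mul_self (a : Fin 4) : pr a * pr a = 1 := by
  fin_cases a <;>
    simp [pr, σx, σy, σz, Matrix.mul_fin_two, Matrix.one_fin_two, Complex.I_mul_I] <;>
    norm_num [Matrix.one_fin_two]

lemma tr2 (a b : Fin 4) : (pr a * pr b).trace = if a = b then 2 else 0 := by
  fin_cases a <;> fin_cases b <;>
    norm_num [pr, σx, σy, σz, Matrix.mul_fin_two, Matrix.trace_fin_two,
      Matrix.one_fin_two, Complex.ext_iff, Fin.ext_iff]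

lemma trace_pr (a : Fin 4) : (pr a).trace = if a = 0 then 2 else 0 := by
  fin_cases a <;> norm_num [pr, σx, σy, σz, Matrix.trace_fin_two, Matrix.one_fin_two, Fin.ext_iff]

-- stage 2
lemma kron_conjTranspose {l m n p : Type*} (A : Matrix l m ℂ) (B : Matrix n p ℂ) :
    (A ⊗ₖ B)ᴴ = Aᴴ ⊗ₖ Bᴴ := by
  ext ⟨i, j⟩ ⟨k, l⟩
  simp [conjTranspose_apply, kroneckerMap_apply, mul_comm]

lemma gen_herm (i : Fin 10) : (gen i)ᴴ = gen i := by
  rw [gen, kron_conjTranspose, pr_herm, pr_herm]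

lemma gen_mul_self (i : Fin 10) : gen i * gen i = 1 := by
  rw [gen, ← Matrix.mul_kronecker_mul, pr_mul_self, pr_mul_self, Matrix.one_kronecker_one]

lemma gen_zero : gen 0 = 1 := by
  show pr 0 ⊗ₖ pr 0 = 1
  · show (1 : Matrix (Fin 2) (Fin 2) ℂ) ⊗ₖ (1 : Matrix (Fin 2) (Fin 2) ℂ) = 1
    exact Matrix.one_kronecker_one

lemma trace_gen_mul (i k : Fin 10) : (gen i * gen k).trace = if i = k then 4 else 0 := by
  rw [gen, gen, ← Matrix.mul_kronecker_mul, Matrix.trace_kronecker, tr2, tr2]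
  have hinj : ∀ i k : Fin 10, i ≠ k → (fa i ≠ fa k ∨ fb i ≠ fb k) := by decide
  by_cases h : i = k
  · norm_num [h]
  · rcases hinj i k h with h' | h' <;> simp [h, h']

-- conjM lemmas
lemma conjM_kron {l m n p : Type*} (A : Matrix l m ℂ) (B : Matrix n p ℂ) :
    conjM (A ⊗ₖ B) = conjM A ⊗ₖ conjM B := by
  ext ⟨i, j⟩ ⟨k, l⟩
  simp [conjM, kroneckerMap_apply]

lemma conjM_pr (a : Fin 4) : conjM (pr a) = if a = 2 then -pr a else pr a := by
  fin_cases a <;>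
    · ext i j
      fin_cases i <;> fin_cases j <;>
        norm_num [conjM, pr, σx, σy, σz, Matrix.one_fin_two, Fin.ext_iff, Complex.ext_iff]

lemma neg_kron_neg {l m n p : Type*} (A : Matrix l m ℂ) (B : Matrix n p ℂ) :
    (-A) ⊗ₖ (-B) = A ⊗ₖ B := by
  ext ⟨i, j⟩ ⟨k, l⟩
  simp

lemma conjM_gen (i : Fin 10) : conjM (gen i) = gen i := by
  rw [gen, conjM_kron, conjM_pr, conjM_pr]
  have hiff : ∀ j : Fin 10, fa j = 2 ↔ fb j = 2 := by decide
  by_cases h1 : fa i = 2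
  · have h2 : fb i = 2 := (hiff i).mp h1
    simp [h1, h2, neg_kron_neg]
  · have h2 : fb i ≠ 2 := fun h => h1 ((hiff i).mpr h)
    simp [h1, h2]

lemma conjM_real_lin (r s : ℝ) (M N : Matrix Q2 Q2 ℂ) :
    conjM (r • M + s • N) = r • conjM M + s • conjM N := by
  ext i j
  simp [conjM, Matrix.add_apply, Matrix.smul_apply, Complex.real_smul, _root_.map_mul]

-- ptr2 lemmas
lemma ptr2_kron (A B : Matrix (Fin 2) (Fin 2) ℂ) : ptr2 (A ⊗ₖ B) = B.trace • A := by
  ext i j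
  simp [ptr2, kroneckerMap_apply, Matrix.trace, Matrix.diag, Finset.mul_sum, mul_comm]
  ring

lemma ptr2_lin (r s : ℝ) (M N : Matrix Q2 Q2 ℂ) :
    ptr2 (r • M + s • N) = r • ptr2 M + s • ptr2 N := by
  ext i j
  simp [ptr2, Matrix.add_apply, Matrix.smul_apply, Finset.sum_add_distrib, Finset.smul_sum]

lemma ptr2_gen0 : ptr2 (gen 0) = (2:ℂ) • 1 := by
  rw [gen, ptr2_kron, trace_pr]
  norm_num [show fa 0 = 0 from rfl, show fb 0 = 0 from rfl, show pr 0 = 1 from rfl]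

lemma ptr2_gen_of (i : Fin 10) (h : fb i ≠ 0) : ptr2 (gen i) = 0 := by
  rw [gen, ptr2_kron, trace_pr]
  simp [h]

def Mchoi (k : Fin 10) (s : ℝ) : Matrix Q2 Q2 ℂ := (1/2 : ℝ) • gen 0 + s • gen k

lemma psd_aux (G : Matrix Q2 Q2 ℂ) (hH : Gᴴ = G) (hG : G * G = 1) (x y : ℝ) :
    (((x^2 + y^2 : ℝ)) • (1 : Matrix Q2 Q2 ℂ) + ((2*x*y : ℝ)) • G).PosSemidef := by
  have h : ((x^2 + y^2 : ℝ)) • (1 : Matrix Q2 Q2 ℂ) + ((2*x*y : ℝ)) • G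
      = (x • 1 + y • G)ᴴ * (x • 1 + y • G) := by
    rw [conjTranspose_add, conjTranspose_smul, conjTranspose_smul, conjTranspose_one, hH]
    simp only [star_trivial, add_mul, mul_add, smul_mul_assoc, Matrix.mul_smul, one_mul,
      Matrix.mul_one, hG, smul_smul]
    module
  rw [h]
  exact posSemidef_conjTranspose_mul_self _

lemma Mchoi_psd (k : Fin 10) (s : ℝ) (hs : s = 0 ∨ s = 1/4 ∨ s = -(1/4)) :
    (Mchoi k s).PosSemidef := by
  have h3 : Real.sqrt 3 ^ 2 = 3 := Real.sq_sqrt (by norm_num)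
  have h2 : Real.sqrt (1/2) ^ 2 = 1/2 := Real.sq_sqrt (by norm_num)
  obtain ⟨x, y, hxy, hs'⟩ : ∃ x y : ℝ, x^2 + y^2 = 1/2 ∧ 2*x*y = s := by
    rcases hs with h | h | h
    · exact ⟨Real.sqrt (1/2), 0, by rw [h2]; ring, by rw [h]; ring⟩
    · exact ⟨(Real.sqrt 3 + 1)/4, (Real.sqrt 3 - 1)/4, by nlinarith [h3], by nlinarith [h3]⟩
    · exact ⟨(Real.sqrt 3 + 1)/4, -((Real.sqrt 3 - 1)/4), by nlinarith [h3], by nlinarith [h3]⟩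
  have := psd_aux (gen k) (gen_herm k) (gen_mul_self k) x y
  rw [hxy, hs'] at this
  rw [Mchoi, gen_zero]
  exact this

lemma Mchoi_isChoi (k : Fin 10) (s : ℝ) (hk : fb k ≠ 0)
    (hs : s = 0 ∨ s = 1/4 ∨ s = -(1/4)) : IsRealCPTPChoi (Mchoi k s) := by
  refine ⟨?_, Mchoi_psd k s hs, ?_⟩
  · rw [Mchoi, conjM_real_lin, conjM_gen, conjM_gen]
  · rw [Mchoi, ptr2_lin, ptr2_gen0, ptr2_gen_of k hk]
    ext i j
    simp [Matrix.smul_apply, Matrix.one_apply, apply_ite]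

lemma trace_gen_Mchoi (i k : Fin 10) (s : ℝ) (hk : k ≠ 0) :
    (gen i * Mchoi k s).trace
      = (if i = 0 then (2:ℂ) else 0) + (if i = k then (s:ℂ)*4 else 0) := by
  have h0 : gen i * ((1/2:ℝ) • gen 0 + s • gen k)
      = (1/2:ℝ) • (gen i * gen 0) + s • (gen i * gen k) := by
    rw [mul_add, mul_smul_comm, mul_smul_comm]
  rw [Mchoi, h0, trace_add, trace_smul, trace_smul, trace_gen_mul, trace_gen_mul]
  by_cases h1 : i = 0
  · have h2 : i ≠ k := fun h => hk (by rw [← h, h1])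
    simp [h1, h2, Complex.real_smul]
    norm_num
  · by_cases h2 : i = k <;> simp [h1, h2, Complex.real_smul] <;> ring

-- span representation helper
lemma kron_mem_span {a b : Matrix Q2 Q2 ℂ}
    (ha : a ∈ Submodule.span ℝ (Set.range gen)) (hb : b ∈ Submodule.span ℝ (Set.range gen)) :
    a ⊗ₖ b ∈ Submodule.span ℝ
      (Set.range fun p : Fin 10 × Fin 10 => gen p.1 ⊗ₖ gen p.2) := by
  have h1 : a ⊗ₖ b ∈ Submodule.map₂ (kroneckerMapBilinear (LinearMap.mul ℝ ℂ))
      (Submodule.span ℝ (Set.range gen)) (Submodule.span ℝ (Set.range gen)) := by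
    have := Submodule.apply_mem_map₂ (kroneckerMapBilinear (LinearMap.mul ℝ ℂ)) ha hb
    convert this using 2
    rfl
  rw [Submodule.map₂_span_span] at h1
  refine Submodule.span_le.mpr ?_ h1
  rintro m ⟨x, ⟨i, rfl⟩, y, ⟨j, rfl⟩, rfl⟩
  exact Submodule.subset_span ⟨(i, j), rfl⟩

lemma sum_expand (d : Fin 10 → Fin 10 → ℂ) (k l : Fin 10) (u v : ℂ) :
    ∑ p : Fin 10 × Fin 10, d p.1 p.2 *
      (((if p.1 = 0 then (2:ℂ) else 0) + (if p.1 = k then u else 0)) *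
       ((if p.2 = 0 then (2:ℂ) else 0) + (if p.2 = l then v else 0)))
    = 2*(2*d 0 0 + v*d 0 l) + u*(2*d k 0 + v*d k l) := by
  rw [Fintype.sum_prod_type]
  have inner : ∀ (a : Fin 10) (t : ℂ) (w : Fin 10 → ℂ),
      ∑ j : Fin 10, w j * ((if j = 0 then (2:ℂ) else 0) + (if j = a then t else 0))
        = w 0 * 2 + w a * t := by
    intro a t w
    simp only [mul_add, mul_ite, mul_zero, Finset.sum_add_distrib,
      Finset.sum_ite_eq', Finset.mem_univ, if_true]
  have step1 : ∀ i : Fin 10,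
      ∑ j : Fin 10, d i j *
        (((if i = 0 then (2:ℂ) else 0) + (if i = k then u else 0)) *
         ((if j = 0 then (2:ℂ) else 0) + (if j = l then v else 0)))
      = ((if i = 0 then (2:ℂ) else 0) + (if i = k then u else 0)) *
          (d i 0 * 2 + d i l * v) := by
    intro i
    rw [← inner l v (fun j => d i j)]
    rw [Finset.mul_sum]
    exact Finset.sum_congr rfl fun j _ => by ring
  simp only [step1]
  calc ∑ i : Fin 10, ((if i = 0 then (2:ℂ) else 0) + (if i = k then u else 0)) *
          (d i 0 * 2 + d i l * v)
      = ∑ i : Fin 10, (fun i => (d i 0 * 2 + d i l * v)) i *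
          ((if i = 0 then (2:ℂ) else 0) + (if i = k then u else 0)) := by
        exact Finset.sum_congr rfl fun i _ => by ring
    _ = (d 0 0 * 2 + d 0 l * v) * 2 + (d k 0 * 2 + d k l * v) * u := by
        rw [inner k u (fun i => (d i 0 * 2 + d i l * v))]
    _ = 2*(2*d 0 0 + v*d 0 l) + u*(2*d k 0 + v*d k l) := by ring


lemma hermle : HermR ≤ Submodule.span ℝ (Set.range gen) := by
  refine Submodule.span_le.mpr ?_
  intro x hx
  simp only [hermRGen, Set.mem_insert_iff, Set.mem_singleton_iff] at hx
  rcases hx with rfl|rfl|rfl|rfl|rfl|rfl|rfl|rfl|rfl|rfl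
  exacts [Submodule.subset_span ⟨0, rfl⟩, Submodule.subset_span ⟨1, rfl⟩,
    Submodule.subset_span ⟨2, rfl⟩, Submodule.subset_span ⟨3, rfl⟩,
    Submodule.subset_span ⟨4, rfl⟩, Submodule.subset_span ⟨5, rfl⟩,
    Submodule.subset_span ⟨6, rfl⟩, Submodule.subset_span ⟨7, rfl⟩,
    Submodule.subset_span ⟨8, rfl⟩, Submodule.subset_span ⟨9, rfl⟩]

lemma gen_mem_hermRGen (i : Fin 10) : gen i ∈ hermRGen := by
  fin_cases i <;>
    simp only [hermRGen, Set.mem_insert_iff, Set.mem_singleton_iff] <;> tauto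

lemma gen_mem_KX (i : Fin 10) (h : fb i = 0) : gen i ∈ (KX : Set (Matrix Q2 Q2 ℂ)) := by
  fin_cases i <;> simp_all [fb] <;>
    exact Submodule.subset_span (by simp only [Set.mem_insert_iff, Set.mem_singleton_iff]; tauto)

lemma gen_mem_KX0 (i : Fin 10) (h : fb i = 0) (h0 : i ≠ 0) :
    gen i ∈ (KX0 : Set (Matrix Q2 Q2 ℂ)) := by
  fin_cases i <;> simp_all [fb] <;>
    exact Submodule.subset_span (by simp only [Set.mem_insert_iff, Set.mem_singleton_iff]; tauto)

lemma gen_mem_TX (i : Fin 10) (h : fb i ≠ 0) : gen i ∈ TXset :=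
  ⟨Submodule.subset_span (gen_mem_hermRGen i), ptr2_gen_of i h⟩


end Aux

/-- visible sector of bipartite qubit RQT.
If a self-adjoint operator `W_la ∈ Herm_ℝ^{A₁A₂} ⊗ Herm_ℝ^{B₁B₂}` is normalized on
all products of real CPTP Choi matrices, then
`W_la ∈ (K_A ⊗ K_B) ⊕ (T_A ⊗ K_B⁰) ⊕ (K_A⁰ ⊗ T_B)`; equivalently its Pauli
expansion is supported only on OCB-allowed support types. -/
theorem rqt_visible_sector
    (Wla : Matrix (Q2 × Q2) (Q2 × Q2) ℂ)
    (hherm : Wla.IsHermitian)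
    (hmem : Wla ∈ kronSpan (HermR : Set (Matrix Q2 Q2 ℂ)) (HermR : Set (Matrix Q2 Q2 ℂ)))
    (hnorm : ∀ MA MB : Matrix Q2 Q2 ℂ, IsRealCPTPChoi MA → IsRealCPTPChoi MB →
      (Wla * (MA ⊗ₖ MB)).trace = 1) :
    Wla ∈ kronSpan (KX : Set (Matrix Q2 Q2 ℂ)) (KX : Set (Matrix Q2 Q2 ℂ)) ⊔
      kronSpan TXset (KX0 : Set (Matrix Q2 Q2 ℂ)) ⊔
      kronSpan (KX0 : Set (Matrix Q2 Q2 ℂ)) TXset := by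
  -- Step 1: coordinates
  have hW : Wla ∈ Submodule.span ℝ
      (Set.range fun p : Fin 10 × Fin 10 => gen p.1 ⊗ₖ gen p.2) := by
    refine Submodule.span_le.mpr ?_ hmem
    rintro m ⟨a, ha, b, hb, rfl⟩
    exact kron_mem_span (hermle ha) (hermle hb)
  obtain ⟨c, hc⟩ := (Submodule.mem_span_range_iff_exists_fun ℝ).mp hW
  set d : Fin 10 → Fin 10 → ℂ := fun i j => (c (i, j) : ℂ) with hd
  -- Step 2: trace formula
  have htrace : ∀ MA MB : Matrix Q2 Q2 ℂ,
      (Wla * (MA ⊗ₖ MB)).trace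
        = ∑ p : Fin 10 × Fin 10, d p.1 p.2 *
            ((gen p.1 * MA).trace * (gen p.2 * MB).trace) := by
    intro MA MB
    rw [← hc, Finset.sum_mul, Matrix.trace_sum]
    refine Finset.sum_congr rfl fun p _ => ?_
    rw [smul_mul_assoc, Matrix.trace_smul, ← Matrix.mul_kronecker_mul,
      Matrix.trace_kronecker, Complex.real_smul]
  -- Step 3: the family of normalization equations
  have heq : ∀ (k l : Fin 10), fb k ≠ 0 → fb l ≠ 0 → ∀ sA sB : ℝ,
      (sA = 0 ∨ sA = 1/4 ∨ sA = -(1/4)) → (sB = 0 ∨ sB = 1/4 ∨ sB = -(1/4)) →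
      2*(2*d 0 0 + ((sB:ℂ)*4)*d 0 l) + ((sA:ℂ)*4)*(2*d k 0 + ((sB:ℂ)*4)*d k l) = 1 := by
    intro k l hk hl sA sB hsA hsB
    have hk0 : k ≠ 0 := fun h => hk (by rw [h]; rfl)
    have hl0 : l ≠ 0 := fun h => hl (by rw [h]; rfl)
    have h1 := hnorm (Mchoi k sA) (Mchoi l sB)
      (Mchoi_isChoi k sA hk hsA) (Mchoi_isChoi l sB hl hsB)
    rw [htrace] at h1
    have h2 : ∑ p : Fin 10 × Fin 10, d p.1 p.2 *
        (((if p.1 = 0 then (2:ℂ) else 0) + (if p.1 = k then (sA:ℂ)*4 else 0)) *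
         ((if p.2 = 0 then (2:ℂ) else 0) + (if p.2 = l then (sB:ℂ)*4 else 0))) = 1 := by
      rw [← h1]
      refine Finset.sum_congr rfl fun p _ => ?_
      rw [trace_gen_Mchoi p.1 k sA hk0, trace_gen_Mchoi p.2 l sB hl0]
    rw [sum_expand d k l ((sA:ℂ)*4) ((sB:ℂ)*4)] at h2
    exact h2
  have hfb3 : fb 3 ≠ 0 := by decide
  -- vanishing coefficients
  have hc0l : ∀ l : Fin 10, fb l ≠ 0 → d 0 l = 0 := by
    intro l hl
    have e1 := heq 3 l hfb3 hl 0 (1/4) (Or.inl rfl) (Or.inr (Or.inl rfl))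
    have e2 := heq 3 l hfb3 hl 0 (-(1/4)) (Or.inl rfl) (Or.inr (Or.inr rfl))
    push_cast at e1 e2
    linear_combination (1/4) * e1 - (1/4) * e2
  have hck0 : ∀ k : Fin 10, fb k ≠ 0 → d k 0 = 0 := by
    intro k hk
    have e1 := heq k 3 hk hfb3 (1/4) 0 (Or.inr (Or.inl rfl)) (Or.inl rfl)
    have e2 := heq k 3 hk hfb3 (-(1/4)) 0 (Or.inr (Or.inr rfl)) (Or.inl rfl)
    push_cast at e1 e2
    linear_combination (1/4) * e1 - (1/4) * e2
  have hckl : ∀ k l : Fin 10, fb k ≠ 0 → fb l ≠ 0 → d k l = 0 := by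
    intro k l hk hl
    have epp := heq k l hk hl (1/4) (1/4) (Or.inr (Or.inl rfl)) (Or.inr (Or.inl rfl))
    have emm := heq k l hk hl (-(1/4)) (-(1/4)) (Or.inr (Or.inr rfl)) (Or.inr (Or.inr rfl))
    have epm := heq k l hk hl (1/4) (-(1/4)) (Or.inr (Or.inl rfl)) (Or.inr (Or.inr rfl))
    have emp := heq k l hk hl (-(1/4)) (1/4) (Or.inr (Or.inr rfl)) (Or.inr (Or.inl rfl))
    push_cast at epp emm epm emp
    linear_combination (1/4) * epp + (1/4) * emm - (1/4) * epm - (1/4) * emp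
  -- Step 4: assembly
  rw [← hc]
  refine Submodule.sum_mem _ fun p _ => ?_
  obtain ⟨i, j⟩ := p
  by_cases hbi : fb i = 0 <;> by_cases hbj : fb j = 0
  · exact Submodule.mem_sup_left (Submodule.mem_sup_left
      (Submodule.smul_mem _ _ (Submodule.subset_span
        ⟨gen i, gen_mem_KX i hbi, gen j, gen_mem_KX j hbj, rfl⟩)))
  · by_cases hi0 : i = 0
    · have hz : c (i, j) = 0 := by
        have := hc0l j hbj
        rw [hd] at this
        simp only at this
        subst hi0
        exact_mod_cast this
      rw [hz, zero_smul]
      exact Submodule.zero_mem _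
    · exact Submodule.mem_sup_right
        (Submodule.smul_mem _ _ (Submodule.subset_span
          ⟨gen i, gen_mem_KX0 i hbi hi0, gen j, gen_mem_TX j hbj, rfl⟩))
  · by_cases hj0 : j = 0
    · have hz : c (i, j) = 0 := by
        have := hck0 i hbi
        rw [hd] at this
        simp only at this
        subst hj0
        exact_mod_cast this
      rw [hz, zero_smul]
      exact Submodule.zero_mem _
    · exact Submodule.mem_sup_left (Submodule.mem_sup_right
        (Submodule.smul_mem _ _ (Submodule.subset_span
          ⟨gen i, gen_mem_TX i hbi, gen j, gen_mem_KX0 j hbj hj0, rfl⟩)))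
  · have hz : c (i, j) = 0 := by
      have := hckl i j hbi hbj
      rw [hd] at this
      simp only at this
      exact_mod_cast this
    rw [hz, zero_smul]
    exact Submodule.zero_mem _
end
end

section
/- Let G be a finite group with unitary representations on the input and output spaces of n parties, with induced Choi-space actions V_g^{(k)} := U_g^{X^{(k)}_1}⊗conj(U_g^{X^{(k)}_2}). Let W be an n-party twirled process matrix: W is invariant under conjugation by V_g^{(1)}⊗⋯⊗V_g^{(n)} for every g ∈ G, W ⪰ 0, and Tr[W(M_1⊗⋯⊗M_n)] = 1 for all local (G,U)-covariant CPTP Choi matrices M_k. Define the independently twirled operator W̃ := (1/|G|ⁿ) Σ_{g_1,…,g_n ∈ G} (V_{g_1}^{(1)}⊗⋯⊗V_{g_n}^{(n)}) W (V_{g_1}^{(1)}⊗⋯⊗V_{g_n}^{(n)})†. Then: (i) W̃ ⪰ 0; (ii) Tr[W̃(T_1⊗⋯⊗T_n)] = 1 for all (arbitrary, not necessarily covariant) local CPTP Choi matrices T_k, so W̃ is a valid ordinary quantum process matrix; and (iii) Tr[W̃(M_1⊗⋯⊗M_n)] = Tr[W(M_1⊗⋯⊗M_n)] for all local (G,U)-covariant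 Choi operators M_k. Consequently every process correlation of the twirled world at local dimensions d is an ordinary quantum process correlation at the same dimensions. -/
open Matrix BigOperators
open scoped Kronecker ComplexOrder

noncomputable section

/-- CPTP Choi matrix: positive semidefinite with partial trace over the output equal
to the identity on the input. -/
def IsCPTPChoi {a b : Type} [Fintype a] [Fintype b] [DecidableEq a]
    (M : Matrix (a × b) (a × b) ℂ) : Prop :=
  M.PosSemidef ∧ ptr2 M = 1

-- conjM lemmas
lemma conjM_mul {m : Type*} [Fintype m] (A B : Matrix m m ℂ) :
    conjM (A * B) = conjM A * conjM B := Matrix.map_mul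

lemma conjM_conjTranspose {m : Type*} (A : Matrix m m ℂ) :
    (conjM A)ᴴ = conjM Aᴴ := by
  ext i j; simp [conjM, Matrix.conjTranspose_apply]

lemma conjM_one {m : Type*} [Fintype m] [DecidableEq m] :
    conjM (1 : Matrix m m ℂ) = 1 := by
  ext i j; by_cases h : i = j <;> simp [conjM, Matrix.one_apply, h]

-- tensorN lemmas
lemma tensorN_mul {n : ℕ} {ι : Fin n → Type} [∀ k, Fintype (ι k)]
    (A B : ∀ k, Matrix (ι k) (ι k) ℂ) :
    tensorN (fun k => A k * B k) = tensorN A * tensorN B := by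
  ext i j
  show ∏ k, (A k * B k) (i k) (j k) = ∑ x : (k : Fin n) → ι k, (∏ k, A k (i k) (x k)) * ∏ k, B k (x k) (j k)
  simp only [Matrix.mul_apply]
  rw [Fintype.prod_sum (fun k x => A k (i k) x * B k x (j k))]
  exact Finset.sum_congr rfl fun x _ => Finset.prod_mul_distrib

lemma tensorN_conjT {n : ℕ} {ι : Fin n → Type} [∀ k, Fintype (ι k)]
    (A : ∀ k, Matrix (ι k) (ι k) ℂ) :
    (tensorN A)ᴴ = tensorN (fun k => (A k)ᴴ) := by
  ext i j
  show star (∏ k, A k (j k) (i k)) = ∏ k, star (A k (j k) (i k))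
  exact star_prod _ _

lemma tensorN_one {n : ℕ} {ι : Fin n → Type} [∀ k, Fintype (ι k)] [∀ k, DecidableEq (ι k)] :
    tensorN (fun k => (1 : Matrix (ι k) (ι k) ℂ)) = 1 := by
  ext i j
  by_cases h : i = j
  · subst h
    show ∏ k, (1 : Matrix (ι k) (ι k) ℂ) (i k) (i k) = _
    simp [Matrix.one_apply]
  · obtain ⟨k, hk⟩ := Function.ne_iff.mp h
    show ∏ k, (1 : Matrix (ι k) (ι k) ℂ) (i k) (j k) = (1 : Matrix _ _ ℂ) i j
    rw [Matrix.one_apply_ne h]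
    exact Finset.prod_eq_zero (Finset.mem_univ k) (Matrix.one_apply_ne hk)

lemma tensorN_sum {n : ℕ} {ι : Fin n → Type} [∀ k, Fintype (ι k)] {G : Type} [Fintype G]
    (F : ∀ k : Fin n, G → Matrix (ι k) (ι k) ℂ) :
    ∑ g : Fin n → G, tensorN (fun k => F k (g k)) = tensorN (fun k => ∑ h, F k h) := by
  ext i j
  rw [Matrix.sum_apply]
  show _ = ∏ k, (∑ h, F k h) (i k) (j k)
  simp only [Matrix.sum_apply]
  exact (Fintype.prod_sum (fun k h => F k h (i k) (j k))).symm

lemma tensorN_smul {n : ℕ} {ι : Fin n → Type} [∀ k, Fintype (ι k)] (c : ℂ)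
    (A : ∀ k, Matrix (ι k) (ι k) ℂ) :
    tensorN (fun k => c • A k) = c ^ n • tensorN A := by
  ext i j
  show ∏ k, (c • A k) (i k) (j k) = c ^ n * ∏ k, A k (i k) (j k)
  simp only [Matrix.smul_apply, smul_eq_mul]
  rw [Finset.prod_mul_distrib, Finset.prod_const]
  simp

-- psd lemmas
lemma psd_add {m : Type*} [Fintype m] {M N : Matrix m m ℂ}
    (hM : M.PosSemidef) (hN : N.PosSemidef) : (M + N).PosSemidef :=
  ⟨hM.1.add hN.1, fun x => by
    exact (hM.add hN).2 x⟩

lemma psd_sum {m ι : Type*} [Fintype m] (s : Finset ι) (f : ι → Matrix m m ℂ)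
    (hf : ∀ i ∈ s, (f i).PosSemidef) : (∑ i ∈ s, f i).PosSemidef := by
  classical
  induction s using Finset.induction with
  | empty => simpa using Matrix.PosSemidef.zero
  | @insert a s ha ih =>
      rw [Finset.sum_insert ha]
      exact psd_add (hf a (Finset.mem_insert_self a s))
        (ih fun i hi => hf i (Finset.mem_insert_of_mem hi))

lemma psd_smul {m : Type*} [Fintype m] {M : Matrix m m ℂ} (hM : M.PosSemidef)
    {d : ℂ} (hd : 0 ≤ d) : (d • M).PosSemidef := by
  have him : d.im = 0 := (Complex.le_def.mp hd).2.symm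
  constructor
  · unfold Matrix.IsHermitian
    rw [Matrix.conjTranspose_smul, hM.1]
    congr 1
    exact Complex.conj_eq_iff_im.mpr him
  · intro x
    exact (hM.smul hd).2 x

-- ptr2 lemmas
lemma ptr2_smul {a b : Type*} [Fintype b] (c : ℂ) (M : Matrix (a × b) (a × b) ℂ) :
    ptr2 (c • M) = c • ptr2 M := by
  ext i j
  show ∑ z, (c • M) (i, z) (j, z) = c * ∑ z, M (i, z) (j, z)
  simp [Finset.mul_sum]

lemma ptr2_sum {a b ι : Type*} [Fintype b] (s : Finset ι) (f : ι → Matrix (a × b) (a × b) ℂ) :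
    ptr2 (∑ i ∈ s, f i) = ∑ i ∈ s, ptr2 (f i) := by
  ext i j
  show ∑ z, (∑ x ∈ s, f x) (i, z) (j, z) = _
  simp only [Matrix.sum_apply]
  rw [Finset.sum_comm]
  rfl

lemma kron_conjT {a b : Type*} (A : Matrix a a ℂ) (B : Matrix b b ℂ) :
    (A ⊗ₖ B)ᴴ = Aᴴ ⊗ₖ Bᴴ := by
  ext ⟨i, z⟩ ⟨j, w⟩
  simp [Matrix.conjTranspose_apply, Matrix.kroneckerMap_apply, mul_comm]

lemma ptr2_conj {a b : Type*} [Fintype a] [Fintype b] [DecidableEq b]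
    (A : Matrix a a ℂ) (B : Matrix b b ℂ)
    (hB : Bᴴ * B = 1)
    (T : Matrix (a × b) (a × b) ℂ) :
    ptr2 ((A ⊗ₖ conjM B) * T * (A ⊗ₖ conjM B)ᴴ) = A * ptr2 T * Aᴴ := by
  have hBe : ∀ p q : b, (∑ z, star (B z p) * B z q) = if p = q then 1 else 0 := by
    intro p q
    have := congrFun (congrFun hB p) q
    simpa [Matrix.mul_apply, Matrix.one_apply, Matrix.conjTranspose_apply] using this
  ext i j
  show ∑ z, ((A ⊗ₖ conjM B) * T * (A ⊗ₖ conjM B)ᴴ) (i, z) (j, z) = _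
  have hL : ∀ z : b, ((A ⊗ₖ conjM B) * T * (A ⊗ₖ conjM B)ᴴ) (i, z) (j, z)
      = ∑ p : a × b, ∑ q : a × b,
          (A i p.1 * T p q * star (A j q.1)) * (star (B z p.2) * B z q.2) := by
    intro z
    rw [Matrix.mul_apply]
    simp only [Matrix.conjTranspose_apply, Matrix.mul_apply, Finset.sum_mul]
    rw [Finset.sum_comm]
    refine Finset.sum_congr rfl fun p _ => Finset.sum_congr rfl fun q _ => ?_
    simp only [Matrix.kroneckerMap_apply, conjM, Matrix.map_apply, starRingEnd_apply,
      star_mul', star_star]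
    ring
  rw [Finset.sum_congr rfl fun z _ => hL z]
  rw [Finset.sum_comm]
  have step : ∀ p : a × b, (∑ z, ∑ q : a × b,
        (A i p.1 * T p q * star (A j q.1)) * (star (B z p.2) * B z q.2))
      = ∑ q : a × b, (A i p.1 * T p q * star (A j q.1)) * (if p.2 = q.2 then 1 else 0) := by
    intro p
    rw [Finset.sum_comm]
    refine Finset.sum_congr rfl fun q _ => ?_
    rw [← Finset.mul_sum, hBe]
  rw [Finset.sum_congr rfl fun p _ => step p]
  show _ = ∑ q1, (∑ p1, A i p1 * ptr2 T p1 q1) * star (A j q1)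
  simp only [Fintype.sum_prod_type, mul_ite, mul_one, mul_zero, Finset.sum_ite_eq,
    Finset.mem_univ, if_true, ptr2, Finset.sum_mul, Finset.mul_sum]
  have rearr : ∀ (f : a → b → a → ℂ), (∑ x : a, ∑ y : b, ∑ x1 : a, f x y x1)
      = ∑ x1 : a, ∑ x : a, ∑ y : b, f x y x1 := by
    intro f
    rw [show (∑ x : a, ∑ y : b, ∑ x1 : a, f x y x1)
        = ∑ x : a, ∑ x1 : a, ∑ y : b, f x y x1 from
      Finset.sum_congr rfl fun _ _ => Finset.sum_comm]
    exact Finset.sum_comm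
  exact rearr (fun x y x1 => A i x * T (x, y) (x1, y) * star (A j x1))

set_option maxHeartbeats 1600000 in
/-- fixed-representation inclusion.  Independently twirling an
`n`-party twirled process matrix over the local group actions yields an ordinary
quantum process matrix with the same statistics on all covariant local Choi
operators. -/
theorem twirled_subset_qt
    {n : ℕ} {G : Type} [Group G] [Fintype G]
    {ι₁ ι₂ : Fin n → Type}
    [∀ k, Fintype (ι₁ k)] [∀ k, DecidableEq (ι₁ k)]
    [∀ k, Fintype (ι₂ k)] [∀ k, DecidableEq (ι₂ k)]
    (U1 : ∀ k, G → Matrix (ι₁ k) (ι₁ k) ℂ)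
    (U2 : ∀ k, G → Matrix (ι₂ k) (ι₂ k) ℂ)
    (hU1uni : ∀ k g, U1 k g ∈ Matrix.unitaryGroup (ι₁ k) ℂ)
    (hU2uni : ∀ k g, U2 k g ∈ Matrix.unitaryGroup (ι₂ k) ℂ)
    (hU1mul : ∀ k g h, U1 k (g * h) = U1 k g * U1 k h)
    (hU2mul : ∀ k g h, U2 k (g * h) = U2 k g * U2 k h)
    -- the induced local Choi-space actions
    (V : ∀ k, G → Matrix (ι₁ k × ι₂ k) (ι₁ k × ι₂ k) ℂ)
    (hV : ∀ k g, V k g = U1 k g ⊗ₖ conjM (U2 k g))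
    -- `W` is an `n`-party twirled process matrix
    (W : Matrix ((k : Fin n) → ι₁ k × ι₂ k) ((k : Fin n) → ι₁ k × ι₂ k) ℂ)
    (hWinv : ∀ g : G,
      tensorN (fun k => V k g) * W * (tensorN (fun k => V k g))ᴴ = W)
    (hWpsd : W.PosSemidef)
    (hWnorm : ∀ M : ∀ k, Matrix (ι₁ k × ι₂ k) (ι₁ k × ι₂ k) ℂ,
      (∀ k, IsCPTPChoi (M k)) →
      (∀ k g, V k g * M k * (V k g)ᴴ = M k) →
      (W * tensorN M).trace = 1)
    -- the independently twirled operator `W̃`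
    (Wt : Matrix ((k : Fin n) → ι₁ k × ι₂ k) ((k : Fin n) → ι₁ k × ι₂ k) ℂ)
    (hWt : Wt = ((Fintype.card G : ℂ)⁻¹ ^ n) •
      ∑ g : Fin n → G,
        tensorN (fun k => V k (g k)) * W * (tensorN (fun k => V k (g k)))ᴴ) :
    -- (i)  `W̃ ⪰ 0`;
    Wt.PosSemidef ∧
    -- (ii) `W̃` is normalized on arbitrary local CPTP Choi matrices, hence an
    --       ordinary quantum process matrix;
    (∀ T : ∀ k, Matrix (ι₁ k × ι₂ k) (ι₁ k × ι₂ k) ℂ,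
      (∀ k, IsCPTPChoi (T k)) → (Wt * tensorN T).trace = 1) ∧
    -- (iii) `W̃` reproduces all statistics of `W` on covariant local Choi operators.
    (∀ M : ∀ k, Matrix (ι₁ k × ι₂ k) (ι₁ k × ι₂ k) ℂ,
      (∀ k g, V k g * M k * (V k g)ᴴ = M k) →
      (Wt * tensorN M).trace = (W * tensorN M).trace) := by
  classical
  have hcardC : (Fintype.card G : ℂ) ≠ 0 := Nat.cast_ne_zero.mpr Fintype.card_ne_zero
  set c : ℂ := (Fintype.card G : ℂ)⁻¹ with hcdef
  have hcreal : c = ((((Fintype.card G : ℝ))⁻¹ : ℝ) : ℂ) := by rw [hcdef, Complex.ofReal_inv, Complex.ofReal_natCast]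
  have hcnonneg : (0 : ℂ) ≤ c := by
    rw [hcreal]
    exact Complex.zero_le_real.mpr (inv_nonneg.mpr (Nat.cast_nonneg _))
  have hcpownn : (0 : ℂ) ≤ c ^ n := by
    rw [hcreal, ← Complex.ofReal_pow]
    exact Complex.zero_le_real.mpr (pow_nonneg (inv_nonneg.mpr (Nat.cast_nonneg _)) n)
  -- unitarity of the representations
  have hU1s : ∀ k g, (U1 k g)ᴴ * U1 k g = 1 := fun k g => by
    have := (Unitary.mem_iff.mp (hU1uni k g)).1
    rwa [Matrix.star_eq_conjTranspose] at this
  have hU1s' : ∀ k g, U1 k g * (U1 k g)ᴴ = 1 := fun k g => by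
    have := (Unitary.mem_iff.mp (hU1uni k g)).2
    rwa [Matrix.star_eq_conjTranspose] at this
  have hU2s : ∀ k g, (U2 k g)ᴴ * U2 k g = 1 := fun k g => by
    have := (Unitary.mem_iff.mp (hU2uni k g)).1
    rwa [Matrix.star_eq_conjTranspose] at this
  -- V is a unitary representation
  have hVmul : ∀ k (g h : G), V k g * V k h = V k (g * h) := fun k g h => by
    rw [hV, hV, hV, ← Matrix.mul_kronecker_mul, ← conjM_mul, ← hU1mul, ← hU2mul]
  have hU1one : ∀ k, U1 k 1 = 1 := fun k => by
    have hm : U1 k 1 = U1 k 1 * U1 k 1 := by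
      have := hU1mul k 1 1; rwa [one_mul] at this
    have h2 : (U1 k 1)ᴴ * (U1 k 1 * U1 k 1) = (U1 k 1)ᴴ * U1 k 1 := by rw [← hm]
    rwa [← Matrix.mul_assoc, hU1s, one_mul] at h2
  have hU2one : ∀ k, U2 k 1 = 1 := fun k => by
    have hm : U2 k 1 = U2 k 1 * U2 k 1 := by
      have := hU2mul k 1 1; rwa [one_mul] at this
    have h2 : (U2 k 1)ᴴ * (U2 k 1 * U2 k 1) = (U2 k 1)ᴴ * U2 k 1 := by rw [← hm]
    rwa [← Matrix.mul_assoc, hU2s, one_mul] at h2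
  have hVone : ∀ k, V k (1 : G) = 1 := fun k => by
    rw [hV, hU1one, hU2one, conjM_one, Matrix.one_kronecker_one]
  have hVstar : ∀ k g, (V k g)ᴴ * V k g = 1 := fun k g => by
    rw [hV, kron_conjT, ← Matrix.mul_kronecker_mul, hU1s, conjM_conjTranspose, ← conjM_mul,
      hU2s, conjM_one, Matrix.one_kronecker_one]
  have hVinv : ∀ k g, (V k g)ᴴ = V k g⁻¹ := fun k g => by
    have h2 : V k g * V k g⁻¹ = 1 := by
      rw [hVmul, mul_inv_cancel]; exact hVone k
    calc (V k g)ᴴ = (V k g)ᴴ * (V k g * V k g⁻¹) := by rw [h2, Matrix.mul_one]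
      _ = ((V k g)ᴴ * V k g) * V k g⁻¹ := by rw [Matrix.mul_assoc]
      _ = V k g⁻¹ := by rw [hVstar, Matrix.one_mul]
  -- the key trace formula
  have key : ∀ (X : ∀ k, Matrix (ι₁ k × ι₂ k) (ι₁ k × ι₂ k) ℂ),
      (Wt * tensorN X).trace
        = c ^ n * ∑ g : Fin n → G,
            (W * tensorN fun k => (V k (g k))ᴴ * X k * V k (g k)).trace := by
    intro X
    rw [hWt, Matrix.smul_mul, Matrix.trace_smul, Finset.sum_mul, Matrix.trace_sum, smul_eq_mul]
    congr 1
    refine Finset.sum_congr rfl fun g _ => ?_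
    have e2 : tensorN (fun k => (V k (g k))ᴴ * X k * V k (g k))
        = (tensorN fun k => V k (g k))ᴴ * tensorN X * tensorN (fun k => V k (g k)) := by
      rw [tensorN_conjT, ← tensorN_mul, ← tensorN_mul]
    have e1 : tensorN (fun k => V k (g k)) * W * (tensorN fun k => V k (g k))ᴴ * tensorN X
        = tensorN (fun k => V k (g k))
            * (W * ((tensorN fun k => V k (g k))ᴴ * tensorN X)) := by
      simp only [Matrix.mul_assoc]
    rw [e1, Matrix.trace_mul_comm, e2]
    simp only [Matrix.mul_assoc]
  refine ⟨?_, ?_, ?_⟩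
  · -- (i)
    rw [hWt]
    exact psd_smul
      (psd_sum _ _ fun g _ => Matrix.PosSemidef.mul_mul_conjTranspose_same hWpsd _) hcpownn
  · -- (ii)
    intro T hT
    set M : ∀ k, Matrix (ι₁ k × ι₂ k) (ι₁ k × ι₂ k) ℂ :=
      fun k => c • ∑ h : G, (V k h)ᴴ * T k * V k h with hMdef
    have hMpsd : ∀ k, (M k).PosSemidef := by
      intro k
      refine psd_smul (psd_sum _ _ fun h _ => ?_) hcnonneg
      have := Matrix.PosSemidef.mul_mul_conjTranspose_same (hT k).1 ((V k h)ᴴ)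
      rwa [Matrix.conjTranspose_conjTranspose] at this
    have hMtr : ∀ k, ptr2 (M k) = 1 := by
      intro k
      show ptr2 (c • ∑ h : G, (V k h)ᴴ * T k * V k h) = 1
      rw [ptr2_smul, ptr2_sum]
      have hone : ∀ h : G, ptr2 ((V k h)ᴴ * T k * V k h) = 1 := by
        intro h
        have hrepr : (V k h)ᴴ * T k * V k h = V k h⁻¹ * T k * (V k h⁻¹)ᴴ := by
          rw [hVinv k h, hVinv k h⁻¹, inv_inv]
        rw [hrepr, hV]
        rw [ptr2_conj (U1 k h⁻¹) (U2 k h⁻¹) (hU2s k h⁻¹) (T k)]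
        rw [(hT k).2, Matrix.mul_one, hU1s']
      rw [Finset.sum_congr rfl fun h _ => hone h, Finset.sum_const, Finset.card_univ]
      rw [← Nat.cast_smul_eq_nsmul ℂ, smul_smul, hcdef, inv_mul_cancel₀ hcardC, one_smul]
    have hMcov : ∀ k g, V k g * M k * (V k g)ᴴ = M k := by
      intro k g
      show V k g * (c • ∑ h : G, (V k h)ᴴ * T k * V k h) * (V k g)ᴴ
        = c • ∑ h : G, (V k h)ᴴ * T k * V k h
      rw [Matrix.mul_smul, Matrix.smul_mul, Matrix.mul_sum, Finset.sum_mul]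
      congr 1
      have hterm : ∀ h : G, V k g * ((V k h)ᴴ * T k * V k h) * (V k g)ᴴ
          = (V k (h * g⁻¹))ᴴ * T k * V k (h * g⁻¹) := by
        intro h
        rw [hVinv k g, hVinv k h, hVinv k (h * g⁻¹)]
        have l : V k g * V k h⁻¹ = V k ((h * g⁻¹)⁻¹) := by
          rw [hVmul]; congr 1; group
        have r : V k h * V k g⁻¹ = V k (h * g⁻¹) := by rw [hVmul]
        calc V k g * (V k h⁻¹ * T k * V k h) * V k g⁻¹
            = (V k g * V k h⁻¹) * T k * (V k h * V k g⁻¹) := by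
              simp only [Matrix.mul_assoc]
          _ = V k ((h * g⁻¹)⁻¹) * T k * V k (h * g⁻¹) := by rw [l, r]
      rw [Finset.sum_congr rfl fun h _ => hterm h]
      exact Equiv.sum_comp (Equiv.mulRight g⁻¹) (fun h => (V k h)ᴴ * T k * V k h)
    have e : (Wt * tensorN T).trace = (W * tensorN M).trace := by
      rw [key T, ← Matrix.trace_sum, ← Matrix.mul_sum,
        tensorN_sum (fun k h => (V k h)ᴴ * T k * V k h)]
      have hM2 : tensorN M = c ^ n • tensorN (fun k => ∑ h : G, (V k h)ᴴ * T k * V k h) :=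
        tensorN_smul c _
      rw [hM2, Matrix.mul_smul, Matrix.trace_smul, smul_eq_mul]
    rw [e]
    exact hWnorm M (fun k => ⟨hMpsd k, hMtr k⟩) hMcov
  · -- (iii)
    intro M hM
    have hfix : ∀ k (g : G), (V k g)ᴴ * M k * V k g = M k := by
      intro k g
      calc (V k g)ᴴ * M k * V k g
          = (V k g)ᴴ * (V k g * M k * (V k g)ᴴ) * V k g := by rw [hM]
        _ = ((V k g)ᴴ * V k g) * (M k * (((V k g)ᴴ * V k g))) := by
            simp only [Matrix.mul_assoc]
        _ = M k := by rw [hVstar]; simp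
    rw [key M]
    have hconst : ∀ g : Fin n → G,
        (tensorN fun k => (V k (g k))ᴴ * M k * V k (g k)) = tensorN M := by
      intro g
      have hfun : (fun k => (V k (g k))ᴴ * M k * V k (g k)) = M :=
        funext fun k => hfix k (g k)
      rw [hfun]
    rw [Finset.sum_congr rfl fun g _ => by rw [hconst g], Finset.sum_const, Finset.card_univ]
    rw [Fintype.card_fun, Fintype.card_fin, nsmul_eq_mul]
    push_cast
    rw [← mul_assoc, ← mul_pow, inv_mul_cancel₀ hcardC, one_pow, one_mul]
end
end

section
/- Let G be a finite group, let X = (X_1, X_2) be a local input-output pair of finite-dimensional spaces, and let R_{X_1} ≅ R_{X_2} ≅ ℂ^{|G|} carry the left regular representation L_h|g⟩ = |hg⟩. Define the enlarged systems X̂_1 := X_1⊗R_{X_1}, X̂_2 := X_2⊗R_{X_2}, with G acting by Û_h^{X_i} := I_{X_i}⊗L_h, and define the encoding map on Choi operators by Γ_X(M) := Σ_{g∈G} |g⟩⟨g|_{R_{X_1}} ⊗ |g⟩⟨g|_{R_{X_2}} ⊗ M (after the canonical reordering of tensor factors) and the decoding map by D_X(M̂) := (1/|G|) Σ_{g∈G}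 Tr_{R_{X_2}}[(⟨g|_{R_{X_1}}⊗I) M̂ (|g⟩_{R_{X_1}}⊗I)]. Then: (i) if M is a CPTP Choi operator on X_1X_2, then Γ_X(M) is a CPTP Choi operator on X̂_1X̂_2 that is (G,Û)-covariant; and (ii) D_X(Γ_X(M)) = M for every operator M on X_1X_2. -/
open Matrix BigOperators
open scoped Kronecker ComplexOrder

noncomputable section

variable {G : Type} [Group G] [Fintype G] [DecidableEq G]

/-- The left regular representation `L_h |g⟩ = |hg⟩` of a finite group on `ℂ^{|G|}`. -/
def regRep (h : G) : Matrix G G ℂ := fun a b => if a = h * b then 1 else 0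

variable {X1 X2 : Type} [Fintype X1] [DecidableEq X1] [Fintype X2] [DecidableEq X2]

/-- The encoding map `Γ_X(M) = Σ_g |g⟩⟨g|_{R_{X₁}} ⊗ |g⟩⟨g|_{R_{X₂}} ⊗ M`
(after the canonical reordering of tensor factors), as a Choi operator on the
enlarged pair `X̂₁ = X₁ ⊗ ℂ^{|G|}`, `X̂₂ = X₂ ⊗ ℂ^{|G|}`. -/
def Γenc (M : Matrix (X1 × X2) (X1 × X2) ℂ) :
    Matrix ((X1 × G) × (X2 × G)) ((X1 × G) × (X2 × G)) ℂ :=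
  fun p q =>
    if p.1.2 = q.1.2 ∧ p.2.2 = q.2.2 ∧ p.1.2 = p.2.2 then
      M (p.1.1, p.2.1) (q.1.1, q.2.1)
    else 0

/-- The decoding map
`D_X(M̂) = (1/|G|) Σ_g Tr_{R_{X₂}}[(⟨g|_{R_{X₁}} ⊗ I) M̂ (|g⟩_{R_{X₁}} ⊗ I)]`. -/
def Ddec (M : Matrix ((X1 × G) × (X2 × G)) ((X1 × G) × (X2 × G)) ℂ) :
    Matrix (X1 × X2) (X1 × X2) ℂ :=
  fun p q =>
    ((Fintype.card G : ℂ))⁻¹ *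
      ∑ g : G, ∑ r : G, M ((p.1, g), (p.2, r)) ((q.1, g), (q.2, r))

/-- The induced Choi-space action `V̂_h = (I_{X₁}⊗L_h) ⊗ conj(I_{X₂}⊗L_h)` on the
enlarged pair. -/
def Vhat (h : G) : Matrix ((X1 × G) × (X2 × G)) ((X1 × G) × (X2 × G)) ℂ :=
  ((1 : Matrix X1 X1 ℂ) ⊗ₖ regRep h) ⊗ₖ conjM ((1 : Matrix X2 X2 ℂ) ⊗ₖ regRep h)

set_option linter.unusedSectionVars false in
/-- `V̂_h` is the permutation matrix `(x₁,g₁),(x₂,g₂) ↦ (x₁,h⁻¹g₁),(x₂,h⁻¹g₂)` (row form). -/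
lemma Vhat_apply (h : G) (p q : (X1 × G) × (X2 × G)) :
    Vhat h p q =
      if q = ((p.1.1, h⁻¹ * p.1.2), (p.2.1, h⁻¹ * p.2.2)) then 1 else 0 := by
  obtain ⟨⟨a, g1⟩, b, g2⟩ := p
  obtain ⟨⟨c, h1⟩, d, h2⟩ := q
  simp only [Vhat, kroneckerMap_apply, conjM, Matrix.map_apply, regRep, one_apply,
    Prod.mk.injEq, Prod.ext_iff]
  have h1' : (g1 = h * h1) ↔ (h1 = h⁻¹ * g1) := by constructor <;> intro e <;> simp [e]
  have h2' : (g2 = h * h2) ↔ (h2 = h⁻¹ * g2) := by constructor <;> intro e <;> simp [e]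
  by_cases e1 : c = a <;> by_cases e2 : h1 = h⁻¹ * g1 <;>
    by_cases e3 : d = b <;> by_cases e4 : h2 = h⁻¹ * g2 <;>
    simp [e1, e2, e3, e4, h1', h2', eq_comm, apply_ite (starRingEnd ℂ)] <;>
    simp_all [eq_comm]

/-- Conjugating by `V̂_h` permutes the entries. -/
lemma conj_sandwich (h : G) (N : Matrix ((X1 × G) × (X2 × G)) ((X1 × G) × (X2 × G)) ℂ)
    (p q : (X1 × G) × (X2 × G)) :
    (Vhat (X1 := X1) (X2 := X2) h * N * (Vhat (X1 := X1) (X2 := X2) h)ᴴ) p q =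
      N ((p.1.1, h⁻¹ * p.1.2), (p.2.1, h⁻¹ * p.2.2))
        ((q.1.1, h⁻¹ * q.1.2), (q.2.1, h⁻¹ * q.2.2)) := by
  rw [Matrix.mul_assoc, Matrix.mul_apply]
  have key : ∀ p', (N * (Vhat (X1 := X1) (X2 := X2) h)ᴴ) p' q
      = N p' ((q.1.1, h⁻¹ * q.1.2), (q.2.1, h⁻¹ * q.2.2)) := by
    intro p'
    rw [Matrix.mul_apply]
    simp [conjTranspose_apply, Vhat_apply, apply_ite (starRingEnd ℂ)]
  simp only [key, Vhat_apply, ite_mul, one_mul, zero_mul]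
  simp

/-- (i) The encoding `Γ_X` sends CPTP Choi operators to
`(G,Û)`-covariant CPTP Choi operators on the enlarged systems; (ii) the decoding
map undoes the encoding: `D_X ∘ Γ_X = id`. -/
theorem encoding_decoding_properties :
    (∀ M : Matrix (X1 × X2) (X1 × X2) ℂ, IsCPTPChoi M →
      IsCPTPChoi (Γenc (G := G) M) ∧
      ∀ h : G, Vhat h * Γenc M * (Vhat h)ᴴ = Γenc M) ∧
    (∀ M : Matrix (X1 × X2) (X1 × X2) ℂ, Ddec (Γenc (G := G) M) = M) := by
  constructor
  · intro M hM
    obtain ⟨hpsd, htr⟩ := hM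
    obtain ⟨hherm, hquad⟩ := posSemidef_iff_dotProduct_mulVec.mp hpsd
    refine ⟨⟨posSemidef_iff_dotProduct_mulVec.mpr ⟨?_, ?_⟩, ?_⟩, ?_⟩
    · -- Hermitian
      ext ⟨⟨a, g1⟩, b, g2⟩ ⟨⟨c, h1⟩, d, h2⟩
      simp only [conjTranspose_apply, Γenc]
      by_cases e : g1 = h1 ∧ g2 = h2 ∧ g1 = g2
      · obtain ⟨e1, e2, e3⟩ := e
        subst e1; subst e2
        rw [if_pos ⟨rfl, rfl, e3⟩, if_pos ⟨rfl, rfl, e3⟩]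
        exact hherm.apply _ _
      · have e' : ¬(h1 = g1 ∧ h2 = g2 ∧ h1 = h2) := by
          rintro ⟨f1, f2, f3⟩
          refine e ⟨f1.symm, f2.symm, ?_⟩
          rw [← f1, ← f2]; exact f3
        rw [if_neg e', if_neg e]
        simp
    · -- quadratic form
      intro x
      have key : dotProduct (star x) (Γenc (G := G) M *ᵥ x) =
          ∑ g : G, dotProduct (star (fun ab : X1 × X2 => x ((ab.1, g), (ab.2, g))))
            (M *ᵥ (fun ab : X1 × X2 => x ((ab.1, g), (ab.2, g)))) := by
        simp only [dotProduct, mulVec, Γenc, Pi.star_apply, Fintype.sum_prod_type, ite_and,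
          ite_mul, zero_mul, mul_ite, mul_zero]
        simp only [Finset.sum_ite_irrel, Finset.sum_const_zero, Finset.sum_ite_eq,
          Finset.sum_ite_eq', Finset.mem_univ, if_true, mul_ite, mul_zero]
        exact Finset.sum_comm
      rw [key]
      exact Finset.sum_nonneg fun g _ => hquad _
    · -- partial trace
      ext ⟨a, g1⟩ ⟨b, h1⟩
      have lhs : ptr2 (Γenc (G := G) M) (a, g1) (b, h1)
          = if g1 = h1 then ∑ z : X2, M (a, z) (b, z) else 0 := by
        simp only [ptr2, Γenc, Fintype.sum_prod_type]
        by_cases e : g1 = h1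
        · subst e; simp
        · simp [e]
      rw [lhs]
      have htr' : (∑ z, M (a, z) (b, z)) = (1 : Matrix X1 X1 ℂ) a b :=
        congrFun (congrFun htr a) b
      by_cases e : g1 = h1
      · subst e
        rw [if_pos rfl, htr']
        simp [one_apply, Prod.ext_iff]
      · simp [e, one_apply, Prod.ext_iff]
    · -- covariance
      intro h
      ext p q
      rw [conj_sandwich]
      simp only [Γenc, mul_right_inj]
  · intro M
    ext p q
    simp only [Ddec, Γenc, true_and, and_true]
    have inner : ∀ g : G, (∑ r : G, if g = r then M (p.1, p.2) (q.1, q.2) else 0)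
        = M (p.1, p.2) (q.1, q.2) := by intro g; simp
    simp only [inner]
    rw [Finset.sum_const, Finset.card_univ, nsmul_eq_mul, ← mul_assoc,
      inv_mul_cancel₀ (Nat.cast_ne_zero.mpr Fintype.card_ne_zero), one_mul]
end
end
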